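/- For n > 3, the set of distinct eigenvalues of the adjacency matrix of L(n) is exactly {-2, -1, 0, n-2, n-1}; in particular L(n) is an integral graph with precisely five distinct eigenvalues. -/

import Mathlib

set_option linter.unusedVariables false

open SimpleGraph Finset

/-- Vertices of `H(n)`: subsets of `[n]` of size 1 or 2. -/
def HV (n : ℕ) := {s : Finset (Fin n) // s.card = 1 ∨ s.card = 2}

instance (n : ℕ) : DecidableEq (HV n) := Subtype.instDecidableEq
instance (n : ℕ) : Fintype (HV n) := Subtype.fintype _

/-- The graph `H(n)`: adjacency is strict inclusion. -/
def Hgraph (n : ℕ) : SimpleGraph (HV n) where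
  Adj x y := x.1 ⊂ y.1 ∨ y.1 ⊂ x.1
  symm := ⟨fun x y h => h.symm⟩
  loopless := ⟨fun x h => (ssubset_irrefl x.1) (h.elim id id)⟩

instance (n : ℕ) : DecidableRel (Hgraph n).Adj :=
  fun x y => inferInstanceAs (Decidable (_ ∨ _))

noncomputable instance (n : ℕ) : DecidableRel ((Hgraph n).lineGraph).Adj :=
  Classical.decRel _

def Hv1 {n : ℕ} (i : Fin n) : HV n := ⟨{i}, Or.inl (Finset.card_singleton i)⟩

def Hv2 {n : ℕ} (i j : Fin n) (h : i ≠ j) : HV n := ⟨{i, j}, Or.inr (Finset.card_pair h)⟩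

lemma Hadj12 {n : ℕ} (i j : Fin n) (h : i ≠ j) : (Hgraph n).Adj (Hv1 i) (Hv2 i j h) :=
  Or.inl (Finset.ssubset_iff_subset_ne.mpr ⟨by simp [Hv1, Hv2, Finset.singleton_subset_iff], by
    simp only [Hv1, Hv2]
    intro he
    apply h
    have : j ∈ ({i} : Finset (Fin n)) := by rw [he]; simp
    simpa [eq_comm] using this⟩)

/-- The vertex `[i, ij]` of the line graph `L(n)`, i.e. the edge `{{i},{i,j}}` of `H(n)`. -/
def edgeV {n : ℕ} (i j : Fin n) (h : i ≠ j) : (Hgraph n).edgeSet :=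
  ⟨s(Hv1 i, Hv2 i j h), (Hgraph n).mem_edgeSet.mpr (Hadj12 i j h)⟩

def permMap {n : ℕ} (α : Equiv.Perm (Fin n)) (s : HV n) : HV n :=
  ⟨s.1.image α, by rw [Finset.card_image_of_injective _ α.injective]; exact s.2⟩

def permHom {n : ℕ} (α : Equiv.Perm (Fin n)) : Hgraph n →g Hgraph n where
  toFun := permMap α
  map_rel' := by
    intro x y hxy
    rcases hxy with h | h
    · exact Or.inl ((Finset.image_ssubset_image α.injective).mpr h)
    · exact Or.inr ((Finset.image_ssubset_image α.injective).mpr h)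

/-- The map induced by a permutation `α` of `[n]` on the vertices of the line graph `L(n)`. -/
def permEdge {n : ℕ} (α : Equiv.Perm (Fin n)) :
    (Hgraph n).edgeSet → (Hgraph n).edgeSet :=
  (permHom α).mapEdgeSet

/-!
Write the edge `{{i}, {i, j}}` of `H(n)` as the arc `(i, j)`, `i ≠ j`. Two arcs are adjacent in
`L(n)` iff they share their tail or are reverses of each other, so an eigenvector `W` of `L(n)`
for `μ`, extended by zero to the diagonal, satisfies
`R i - W (i, j) + W (j, i) = μ W (i, j)` with row sums `R i = ∑ₗ W (i, l)`.
Summing over `j`, then over `i`, gives `C i = (μ + 2 - n) R i` and `T = (μ + 1) C j` for the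
column sums `C` and the total `T`; comparing `∑ C = T = ∑ R` forces, one after the other,
`T = 0`, `C = 0`, `R = 0` unless `μ ∈ {n - 1, -1, n - 2}`, and then `W (j, i) = (μ + 1) W (i, j)`
forces `W = 0` unless `μ ∈ {0, -2}`. Each of the five values has an explicit eigenvector built
from vectors with zero sum: constant, depending only on the head, `(n - 1) f i + f j`,
and the symmetric and antisymmetric tensors `u ⊗ v ± v ⊗ u`.
-/

open Matrix

theorem Matrix.mem_spectrum_iff_exists_mulVec_eq_smul {K m : Type*} [Field K] [Fintype m]
    [DecidableEq m] (A : Matrix m m K) (μ : K) :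
    μ ∈ spectrum K A ↔ ∃ v ≠ 0, A *ᵥ v = μ • v := by
  rw [← Matrix.spectrum_toLin', ← Module.End.hasEigenvalue_iff_mem_spectrum,
    Module.End.HasEigenvalue, Module.End.HasUnifEigenvalue, Submodule.ne_bot_iff]
  simp [and_comm]

theorem SimpleGraph.Iso.spectrum_adjMatrix {R V W : Type*} [CommRing R] [Fintype V] [Fintype W]
    [DecidableEq V] [DecidableEq W] {G : SimpleGraph V} {H : SimpleGraph W}
    [DecidableRel G.Adj] [DecidableRel H.Adj] (f : G ≃g H) :
    spectrum R (H.adjMatrix R) = spectrum R (G.adjMatrix R) := by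
  rw [← f.reindex_adjMatrix R, ← Matrix.coe_reindexAlgEquiv R R, AlgEquiv.spectrum_eq]

lemma Fintype.sum_ite_eq_zero_eq_sub {ι M : Type*} [Fintype ι] [DecidableEq ι] [AddCommGroup M]
    (i : ι) (g : ι → M) : ∑ l, (if i = l then 0 else g l) = ∑ l, g l - g i := by
  simp [Finset.sum_ite, Finset.filter_ne, Finset.sum_erase_eq_sub]

section
variable {n : ℕ}

lemma Hv1_injective : Function.Injective (Hv1 (n := n)) := fun i k h => by
  simpa [Hv1] using congrArg Subtype.val h

lemma Hv1_ne_Hv2 (i k l : Fin n) (h : k ≠ l) : Hv1 i ≠ Hv2 k l h := fun he => by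
  simpa [Hv1, Hv2, Finset.card_pair h] using congrArg (fun s => s.1.card) he

lemma Hv2_eq_Hv2_iff {i j k l : Fin n} (hij : i ≠ j) (hkl : k ≠ l) :
    Hv2 i j hij = Hv2 k l hkl ↔ (i = k ∧ j = l) ∨ (i = l ∧ j = k) := by
  rw [← Set.pair_eq_pair_iff, ← Finset.coe_pair, ← Finset.coe_pair, Finset.coe_inj]
  exact Subtype.ext_iff

lemma edgeV_eq_edgeV_iff {i j k l : Fin n} (hij : i ≠ j) (hkl : k ≠ l) :
    edgeV i j hij = edgeV k l hkl ↔ i = k ∧ j = l := by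
  refine ⟨fun h => ?_, by rintro ⟨rfl, rfl⟩; rfl⟩
  rw [edgeV, edgeV, Subtype.mk.injEq, Sym2.eq_iff] at h
  rcases h with ⟨h1, h2⟩ | ⟨h1, -⟩
  · obtain rfl := Hv1_injective h1
    rcases (Hv2_eq_Hv2_iff hij hkl).mp h2 with h | ⟨-, rfl⟩
    · exact h
    · exact absurd rfl hij
  · exact absurd h1 (Hv1_ne_Hv2 i k l hkl)

lemma exists_Hv1_Hv2_of_ssubset {x y : HV n} (h : x.1 ⊂ y.1) :
    ∃ i j, ∃ hij : i ≠ j, x = Hv1 i ∧ y = Hv2 i j hij := by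
  have hcard : x.1.card < y.1.card := Finset.card_lt_card h
  have hx : x.1.card = 1 ∨ x.1.card = 2 := x.2
  have hy : y.1.card = 1 ∨ y.1.card = 2 := y.2
  obtain ⟨i, hi⟩ := Finset.card_eq_one.mp (show x.1.card = 1 by omega)
  obtain ⟨u, v, huv, huv'⟩ := Finset.card_eq_two.mp (show y.1.card = 2 by omega)
  have hiy : i ∈ y.1 := h.subset (by simp [hi])
  rw [huv', Finset.mem_insert, Finset.mem_singleton] at hiy
  rcases hiy with rfl | rfl
  · exact ⟨i, v, huv, Subtype.ext hi, Subtype.ext huv'⟩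
  · exact ⟨i, u, huv.symm, Subtype.ext hi, Subtype.ext (huv'.trans (Finset.pair_comm _ _))⟩

lemma exists_edgeV_eq (e : (Hgraph n).edgeSet) : ∃ i j, ∃ hij : i ≠ j, edgeV i j hij = e := by
  obtain ⟨e, he⟩ := e
  induction e using Sym2.inductionOn with
  | hf x y =>
    rcases (Hgraph n).mem_edgeSet.mp he with h | h
    · obtain ⟨i, j, hij, rfl, rfl⟩ := exists_Hv1_Hv2_of_ssubset h
      exact ⟨i, j, hij, rfl⟩
    · obtain ⟨i, j, hij, rfl, rfl⟩ := exists_Hv1_Hv2_of_ssubset h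
      exact ⟨i, j, hij, Subtype.ext Sym2.eq_swap⟩

lemma lineGraph_adj_edgeV_iff {i j k l : Fin n} (hij : i ≠ j) (hkl : k ≠ l) :
    (Hgraph n).lineGraph.Adj (edgeV i j hij) (edgeV k l hkl) ↔
      (i = k ∧ j ≠ l) ∨ (i = l ∧ j = k) := by
  rw [lineGraph_adj_iff_exists, Ne, edgeV_eq_edgeV_iff]
  simp only [edgeV, Sym2.mem_iff]
  constructor
  · rintro ⟨hne, x, hx1 | hx1, hx2 | hx2⟩ <;> subst hx1
    · exact Or.inl ⟨Hv1_injective hx2, fun h => hne ⟨Hv1_injective hx2, h⟩⟩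
    · exact absurd hx2 (Hv1_ne_Hv2 _ _ _ _)
    · exact absurd hx2.symm (Hv1_ne_Hv2 _ _ _ _)
    · rcases (Hv2_eq_Hv2_iff _ _).mp hx2 with h | h
      · exact absurd h hne
      · exact Or.inr h
  · rintro (⟨rfl, hjl⟩ | ⟨rfl, rfl⟩)
    · exact ⟨fun h => hjl h.2, Hv1 i, Or.inl rfl, Or.inl rfl⟩
    · exact ⟨fun h => hij h.1, Hv2 i j hij, Or.inr rfl,
        Or.inr ((Hv2_eq_Hv2_iff _ _).mpr (Or.inr ⟨rfl, rfl⟩))⟩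

abbrev Arc (n : ℕ) := {p : Fin n × Fin n // p.1 ≠ p.2}

def Arc.toEdge (p : Arc n) : (Hgraph n).edgeSet := edgeV p.1.1 p.1.2 p.2

lemma Arc.toEdge_bijective : Function.Bijective (Arc.toEdge (n := n)) := by
  refine ⟨fun ⟨_, hp⟩ ⟨_, hq⟩ h => ?_, fun e => ?_⟩
  · obtain ⟨h1, h2⟩ := (edgeV_eq_edgeV_iff hp hq).mp h
    exact Subtype.ext (Prod.ext h1 h2)
  · obtain ⟨i, j, hij, rfl⟩ := exists_edgeV_eq e
    exact ⟨⟨(i, j), hij⟩, rfl⟩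

def arcGraph (n : ℕ) : SimpleGraph (Arc n) where
  Adj p q := (p.1.1 = q.1.1 ∧ p.1.2 ≠ q.1.2) ∨ (p.1.1 = q.1.2 ∧ p.1.2 = q.1.1)
  symm := ⟨fun _ _ h => h.imp (fun h => ⟨h.1.symm, h.2.symm⟩) (fun h => ⟨h.2.symm, h.1.symm⟩)⟩
  loopless := ⟨fun p h => h.elim (fun h => h.2 rfl) (fun h => p.2 h.1)⟩

instance : DecidableRel (arcGraph n).Adj := fun _ _ => by unfold arcGraph; infer_instance

noncomputable def arcGraphIsoLineGraph (n : ℕ) : arcGraph n ≃g (Hgraph n).lineGraph where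
  toEquiv := Equiv.ofBijective _ Arc.toEdge_bijective
  map_rel_iff' {p q} := (lineGraph_adj_edgeV_iff p.2 q.2 :)

end

section
variable {K : Type*} [Ring K] {n : ℕ}

lemma sum_ite_arcAdj_eq (W : Fin n × Fin n → K) {i j : Fin n} (hij : i ≠ j) :
    ∑ r : Fin n × Fin n, (if (i = r.1 ∧ j ≠ r.2) ∨ (i = r.2 ∧ j = r.1) then W r else 0) =
      ∑ l, W (i, l) - W (i, j) + W (j, i) := by
  have hsplit (r : Fin n × Fin n) :
      (if (i = r.1 ∧ j ≠ r.2) ∨ (i = r.2 ∧ j = r.1) then W r else 0) =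
        (if r.1 = i then W r else 0) - (if r = (i, j) then W r else 0) +
          (if r = (j, i) then W r else 0) := by
    obtain ⟨k, l⟩ := r
    simp only [Prod.mk.injEq]
    split_ifs <;> grind
  have hrow : ∑ r : Fin n × Fin n, (if r.1 = i then W r else 0) = ∑ l, W (i, l) := by
    rw [Fintype.sum_prod_type, Finset.sum_comm]
    simp
  simp only [hsplit, Finset.sum_add_distrib, Finset.sum_sub_distrib, hrow, Finset.sum_ite_eq',
    Finset.mem_univ, if_true]

lemma arcGraph_adjMatrix_mulVec {W : Fin n × Fin n → K} (hW : ∀ k, W (k, k) = 0) {i j : Fin n}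
    (hij : i ≠ j) :
    ((arcGraph n).adjMatrix K *ᵥ fun q => W q.1) ⟨(i, j), hij⟩ =
      ∑ l, W (i, l) - W (i, j) + W (j, i) := by
  rw [← sum_ite_arcAdj_eq W hij,
    ← Fintype.sum_subtype_add_sum_subtype (fun r : Fin n × Fin n => r.1 ≠ r.2)]
  have hdiag : ∑ r : {r : Fin n × Fin n // ¬r.1 ≠ r.2},
      (if (i = r.1.1 ∧ j ≠ r.1.2) ∨ (i = r.1.2 ∧ j = r.1.1) then W r.1 else 0) = 0 :=
    Finset.sum_eq_zero fun ⟨⟨k, l⟩, hkl⟩ _ => by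
      obtain rfl : k = l := not_not.mp hkl
      simp [hW]
  rw [hdiag, add_zero]
  simp only [mulVec, dotProduct, adjMatrix_apply, ite_mul, one_mul, zero_mul]
  rfl

end

section
variable {K : Type*} [Field K] {n : ℕ}

structure IsArcEigenfunction (μ : K) (W : Fin n × Fin n → K) : Prop where
  diag : ∀ k, W (k, k) = 0
  eigen : ∀ i j, i ≠ j → ∑ l, W (i, l) - W (i, j) + W (j, i) = μ * W (i, j)

lemma mem_spectrum_arcGraph_iff (μ : K) :
    μ ∈ spectrum K ((arcGraph n).adjMatrix K) ↔
      ∃ W : Fin n × Fin n → K, W ≠ 0 ∧ IsArcEigenfunction μ W := by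
  rw [Matrix.mem_spectrum_iff_exists_mulVec_eq_smul]
  constructor
  · rintro ⟨v, hv0, hv⟩
    set W : Fin n × Fin n → K := fun p => if h : p.1 = p.2 then 0 else v ⟨p, h⟩
    have hWv : (fun q : Arc n => W q.1) = v := funext fun q => dif_neg q.2
    have hdiag : ∀ k, W (k, k) = 0 := fun k => dif_pos rfl
    refine ⟨W, fun h => hv0 (by rw [← hWv, h]; rfl), hdiag, fun i j hij => ?_⟩
    rw [← arcGraph_adjMatrix_mulVec hdiag hij, hWv, hv]
    simp [W, hij]
  · rintro ⟨W, hW0, hW⟩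
    obtain ⟨⟨a, b⟩, hab⟩ : ∃ p, W p ≠ 0 := Function.ne_iff.mp hW0
    have hab' : a ≠ b := by rintro rfl; exact hab (hW.diag a)
    refine ⟨fun q => W q.1, fun h => hab (congrFun h ⟨(a, b), hab'⟩), ?_⟩
    funext ⟨⟨i, j⟩, hij⟩
    exact (arcGraph_adjMatrix_mulVec hW.diag hij).trans (hW.eigen i j hij)

namespace IsArcEigenfunction
variable {μ : K} {W : Fin n × Fin n → K}

lemma rowSum_add (hW : IsArcEigenfunction μ W) (i j : Fin n) :
    ∑ l, W (i, l) + W (j, i) = (μ + 1) * W (i, j) + if i = j then ∑ l, W (i, l) else 0 := by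
  by_cases hij : i = j
  · subst hij
    simp [hW.diag]
  · rw [if_neg hij]
    linear_combination hW.eigen i j hij

lemma colSum_eq (hW : IsArcEigenfunction μ W) (i : Fin n) :
    ∑ k, W (k, i) = (μ + 2 - n) * ∑ l, W (i, l) := by
  have h := Finset.sum_congr rfl fun j (_ : j ∈ Finset.univ) => hW.rowSum_add i j
  simp only [Finset.sum_add_distrib, Finset.sum_const, Finset.card_univ, Fintype.card_fin,
    nsmul_eq_mul, ← Finset.mul_sum, Finset.sum_ite_eq, Finset.mem_univ, if_true] at h
  linear_combination h

lemma total_eq (hW : IsArcEigenfunction μ W) (j : Fin n) :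
    ∑ i, ∑ l, W (i, l) = (μ + 1) * ∑ k, W (k, j) := by
  have h := Finset.sum_congr rfl fun i (_ : i ∈ Finset.univ) => hW.rowSum_add i j
  simp only [Finset.sum_add_distrib, ← Finset.mul_sum, Finset.sum_ite_eq', Finset.mem_univ,
    if_true] at h
  linear_combination h

lemma eq_zero_of_rowSum_eq_zero (hW : IsArcEigenfunction μ W) (hR : ∀ i, ∑ l, W (i, l) = 0)
    (h2 : μ ≠ -2) (h0 : μ ≠ 0) : W = 0 := by
  funext ⟨i, j⟩
  by_cases hij : i = j
  · subst hij
    exact hW.diag i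
  have e1 := hW.eigen i j hij
  have e2 := hW.eigen j i (Ne.symm hij)
  rw [hR] at e1 e2
  have h : (μ * (μ + 2)) * W (i, j) = 0 := by linear_combination -e2 - (μ + 1) * e1
  exact (mul_eq_zero.mp h).resolve_left
    (mul_ne_zero h0 fun h => h2 (eq_neg_of_add_eq_zero_left h))

lemma eq_zero (hW : IsArcEigenfunction μ W) (h2 : μ ≠ -2) (h1 : μ ≠ -1) (h0 : μ ≠ 0)
    (hn2 : μ ≠ n - 2) (hn1 : μ ≠ n - 1) : W = 0 := by
  have hT : ∑ i, ∑ l, W (i, l) = 0 := by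
    have h : ∑ i, ∑ l, W (i, l) = (μ + 2 - n) * ∑ i, ∑ l, W (i, l) := by
      rw [Finset.mul_sum, Finset.sum_comm]
      exact Finset.sum_congr rfl fun i _ => hW.colSum_eq i
    exact (mul_eq_zero.mp (by linear_combination -h : (μ + 1 - n) * _ = 0)).resolve_left
      fun h => hn1 (by linear_combination h)
  have hC (j : Fin n) : ∑ k, W (k, j) = 0 :=
    (mul_eq_zero.mp ((hW.total_eq j).symm.trans hT)).resolve_left
      fun h => h1 (by linear_combination h)
  have hR (i : Fin n) : ∑ l, W (i, l) = 0 :=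
    (mul_eq_zero.mp ((hW.colSum_eq i).symm.trans (hC i))).resolve_left
      fun h => hn2 (by linear_combination h)
  exact hW.eq_zero_of_rowSum_eq_zero hR h2 h0

lemma mem_spectrum (hW : IsArcEigenfunction μ W) {p : Fin n × Fin n} (hp : W p ≠ 0) :
    μ ∈ spectrum K ((arcGraph n).adjMatrix K) :=
  (mem_spectrum_arcGraph_iff μ).mpr ⟨W, fun h => hp (congrFun h p), hW⟩

end IsArcEigenfunction

lemma spectrum_arcGraph_subset :
    spectrum K ((arcGraph n).adjMatrix K) ⊆ {-2, -1, 0, (n : K) - 2, (n : K) - 1} := by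
  intro μ hμ
  obtain ⟨W, hW0, hW⟩ := (mem_spectrum_arcGraph_iff μ).mp hμ
  by_contra h
  simp only [Set.mem_insert_iff, Set.mem_singleton_iff, not_or] at h
  obtain ⟨h2, h1, h0, hn2, hn1⟩ := h
  exact hW0 (hW.eq_zero h2 h1 h0 hn2 hn1)

lemma isArcEigenfunction_natCast_sub_one :
    IsArcEigenfunction ((n : K) - 1) fun p : Fin n × Fin n => if p.1 = p.2 then 0 else 1 where
  diag k := if_pos rfl
  eigen i j hij := by
    simp [Fintype.sum_ite_eq_zero_eq_sub, hij, Ne.symm hij]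

lemma isArcEigenfunction_neg_one {f : Fin n → K} (hf : ∑ i, f i = 0) :
    IsArcEigenfunction (-1) fun p : Fin n × Fin n => if p.1 = p.2 then 0 else f p.2 where
  diag k := if_pos rfl
  eigen i j hij := by
    simp only [Fintype.sum_ite_eq_zero_eq_sub, hij, Ne.symm hij, if_false, hf]
    ring

lemma isArcEigenfunction_natCast_sub_two {f : Fin n → K} (hf : ∑ i, f i = 0) :
    IsArcEigenfunction ((n : K) - 2)
      fun p : Fin n × Fin n => if p.1 = p.2 then 0 else (n - 1) * f p.1 + f p.2 where
  diag k := if_pos rfl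
  eigen i j hij := by
    simp only [Fintype.sum_ite_eq_zero_eq_sub, hij, Ne.symm hij, if_false,
      Finset.sum_add_distrib, hf, Finset.sum_const, Finset.card_univ, Fintype.card_fin,
      nsmul_eq_mul]
    ring

lemma isArcEigenfunction_zero {u v : Fin n → K} (hu : ∑ i, u i = 0) (hv : ∑ i, v i = 0)
    (huv : ∀ i, u i * v i = 0) :
    IsArcEigenfunction 0 fun p : Fin n × Fin n => u p.1 * v p.2 + v p.1 * u p.2 where
  diag k := by simp [huv k, mul_comm (v k)]
  eigen i j hij := by
    simp only [Finset.sum_add_distrib, ← Finset.mul_sum, hu, hv]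
    ring

lemma isArcEigenfunction_neg_two {u v : Fin n → K} (hu : ∑ i, u i = 0) (hv : ∑ i, v i = 0) :
    IsArcEigenfunction (-2) fun p : Fin n × Fin n => u p.1 * v p.2 - v p.1 * u p.2 where
  diag k := by simp [mul_comm (v k)]
  eigen i j hij := by
    simp only [Finset.sum_sub_distrib, ← Finset.mul_sum, hu, hv]
    ring

lemma sum_single_sub_single (a b : Fin n) :
    ∑ i, (Pi.single a 1 - Pi.single b 1 : Fin n → K) i = 0 := by
  simp

lemma natCast_sub_one_mem_spectrum_arcGraph (hn : 2 ≤ n) :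
    (n : K) - 1 ∈ spectrum K ((arcGraph n).adjMatrix K) :=
  isArcEigenfunction_natCast_sub_one.mem_spectrum (p := (⟨0, by omega⟩, ⟨1, by omega⟩))
    (by simp [Fin.ext_iff])

lemma neg_one_mem_spectrum_arcGraph (hn : 2 ≤ n) :
    (-1 : K) ∈ spectrum K ((arcGraph n).adjMatrix K) :=
  (isArcEigenfunction_neg_one (sum_single_sub_single ⟨0, by omega⟩ ⟨1, by omega⟩)).mem_spectrum
    (p := (⟨1, by omega⟩, ⟨0, by omega⟩)) (by simp [Fin.ext_iff])

lemma natCast_sub_two_mem_spectrum_arcGraph [CharZero K] (hn : 3 ≤ n) :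
    (n : K) - 2 ∈ spectrum K ((arcGraph n).adjMatrix K) :=
  (isArcEigenfunction_natCast_sub_two
      (sum_single_sub_single ⟨0, by omega⟩ ⟨1, by omega⟩)).mem_spectrum
    (p := (⟨0, by omega⟩, ⟨2, by omega⟩)) (by simp [Fin.ext_iff, sub_eq_zero]; omega)

lemma zero_mem_spectrum_arcGraph (hn : 4 ≤ n) :
    (0 : K) ∈ spectrum K ((arcGraph n).adjMatrix K) := by
  have hdisj (i : Fin n) :
      (Pi.single ⟨0, by omega⟩ 1 - Pi.single ⟨2, by omega⟩ 1 : Fin n → K) i *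
        (Pi.single ⟨1, by omega⟩ 1 - Pi.single ⟨3, by omega⟩ 1 : Fin n → K) i = 0 := by
    simp only [Pi.sub_apply, Pi.single_apply, Fin.ext_iff]
    split_ifs <;> simp_all
  exact (isArcEigenfunction_zero (sum_single_sub_single _ _) (sum_single_sub_single _ _)
    hdisj).mem_spectrum (p := (⟨0, by omega⟩, ⟨1, by omega⟩)) (by simp [Fin.ext_iff])

lemma neg_two_mem_spectrum_arcGraph (hn : 3 ≤ n) :
    (-2 : K) ∈ spectrum K ((arcGraph n).adjMatrix K) :=
  (isArcEigenfunction_neg_two (sum_single_sub_single ⟨0, by omega⟩ ⟨1, by omega⟩)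
      (sum_single_sub_single ⟨1, by omega⟩ ⟨2, by omega⟩)).mem_spectrum
    (p := (⟨0, by omega⟩, ⟨1, by omega⟩)) (by simp [Fin.ext_iff])

end

theorem spectrum_arcGraph {K : Type*} [Field K] [CharZero K] {n : ℕ} (hn : 4 ≤ n) :
    spectrum K ((arcGraph n).adjMatrix K) = {-2, -1, 0, (n : K) - 2, (n : K) - 1} := by
  refine spectrum_arcGraph_subset.antisymm ?_
  simp only [Set.insert_subset_iff, Set.singleton_subset_iff]
  exact ⟨neg_two_mem_spectrum_arcGraph (by omega), neg_one_mem_spectrum_arcGraph (by omega),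
    zero_mem_spectrum_arcGraph hn, natCast_sub_two_mem_spectrum_arcGraph (by omega),
    natCast_sub_one_mem_spectrum_arcGraph (by omega)⟩

/-- For `n > 3`, the set of distinct eigenvalues of the adjacency matrix of `L(n)` is exactly
`{-2, -1, 0, n-2, n-1}`; in particular `L(n)` is integral with precisely five distinct
eigenvalues. -/
theorem lineGraph_spectrum (n : ℕ) (hn : 3 < n) :
    spectrum ℝ (((Hgraph n).lineGraph).adjMatrix ℝ) =
      ({-2, -1, 0, (n : ℝ) - 2, (n : ℝ) - 1} : Set ℝ) ∧
    ∀ μ ∈ spectrum ℝ (((Hgraph n).lineGraph).adjMatrix ℝ), ∃ k : ℤ, μ = (k : ℝ) := by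
  have hspec : spectrum ℝ (((Hgraph n).lineGraph).adjMatrix ℝ) =
      ({-2, -1, 0, (n : ℝ) - 2, (n : ℝ) - 1} : Set ℝ) := by
    rw [(arcGraphIsoLineGraph n).spectrum_adjMatrix, spectrum_arcGraph hn]
  refine ⟨hspec, fun μ hμ => ?_⟩
  rw [hspec] at hμ
  rcases hμ with rfl | rfl | rfl | rfl | rfl
  exacts [⟨-2, by norm_num⟩, ⟨-1, by norm_num⟩, ⟨0, by norm_num⟩, ⟨n - 2, by push_cast; ring⟩,
    ⟨n - 1, by push_cast; ring⟩]
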